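/- arXiv:math/0105168 — 3 statements merged into one kernel-verified Lean document; each statement's English description precedes it below -/
import Mathlib

section
/- Let H₁ ∈ ℝ^{n×n} be nonsingular and define recursively H_{i+1} = H_i - (H_i a_i w_iᵀ H_i)/(w_iᵀ H_i a_i), where a_i, w_i ∈ ℝⁿ satisfy w_iᵀ H_i a_i ≠ 0. Then H_{i+1} a_j = 0 for all j ≤ i. -/
open Matrix

lemma vecMulVec_mulVec' {n : ℕ} (u v x : Fin n → ℝ) :
    vecMulVec u v *ᵥ x = (v ⬝ᵥ x) • u := by
  ext i
  simp [vecMulVec, mulVec, dotProduct, Finset.mul_sum, mul_comm, mul_left_comm]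

lemma abaffian_step {n : ℕ} (M : Matrix (Fin n) (Fin n) ℝ) (u x y : Fin n → ℝ)
    (h : u ⬝ᵥ (M *ᵥ x) ≠ 0)
    (hy : M *ᵥ y = ((u ⬝ᵥ (M *ᵥ y)) * (u ⬝ᵥ (M *ᵥ x))⁻¹) • (M *ᵥ x)) :
    (M - (u ⬝ᵥ (M *ᵥ x))⁻¹ • vecMulVec (M *ᵥ x) (Mᵀ *ᵥ u)) *ᵥ y = 0 := by
  have hdot : (Mᵀ *ᵥ u) ⬝ᵥ y = u ⬝ᵥ (M *ᵥ y) := by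
    rw [mulVec_transpose, ← dotProduct_mulVec]
  rw [sub_mulVec, smul_mulVec, vecMulVec_mulVec', hdot, hy, dotProduct_smul,
    smul_eq_mul, smul_smul, sub_eq_zero]
  congr 1
  field_simp

/-- Under the Abaffian update of the ABS algorithm, `H (i+1)` annihilates
all previous vectors `a j`, `j ≤ i`. -/
theorem abs_abaffian_annihilates
    {n : ℕ} (H : ℕ → Matrix (Fin n) (Fin n) ℝ) (a w : ℕ → Fin n → ℝ)
    (hH1 : (H 1).det ≠ 0)
    (hw : ∀ i, 1 ≤ i → w i ⬝ᵥ (H i *ᵥ a i) ≠ 0)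
    (hrec : ∀ i, 1 ≤ i →
      H (i + 1) = H i -
        (w i ⬝ᵥ (H i *ᵥ a i))⁻¹ • vecMulVec (H i *ᵥ a i) ((H i)ᵀ *ᵥ w i)) :
    ∀ i, 1 ≤ i → ∀ j, 1 ≤ j → j ≤ i → H (i + 1) *ᵥ a j = 0 := by
  intro i hi
  induction i with
  | zero => omega
  | succ k ih =>
    intro j hj hji
    rw [hrec (k+1) hi]
    rcases eq_or_lt_of_le hji with h | h
    · subst h
      apply abaffian_step _ _ _ _ (hw (k+1) hi)
      rw [mul_inv_cancel₀ (hw (k+1) hi), one_smul]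
    · have hk : 1 ≤ k := by omega
      have h0 : H (k+1) *ᵥ a j = 0 := ih hk j hj (by omega)
      apply abaffian_step _ _ _ _ (hw (k+1) hi)
      rw [h0]
      simp [h0]
end

section
/- In the ABS algorithm, the matrix L_i = A_iᵀ P_i, where A_i = (a₁,…,a_i)ᵀ and P_i = (p₁,…,p_i), is lower triangular with nonzero diagonal entries, hence nonsingular (implicit LU factorization property). -/
open Matrix

lemma abs_key {n : ℕ} (H : ℕ → Matrix (Fin n) (Fin n) ℝ) (a w : ℕ → Fin n → ℝ)
    (hw : ∀ j, 1 ≤ j → w j ⬝ᵥ (H j *ᵥ a j) ≠ 0)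
    (hrec : ∀ j, 1 ≤ j →
      H (j + 1) = H j -
        (w j ⬝ᵥ (H j *ᵥ a j))⁻¹ • vecMulVec (H j *ᵥ a j) ((H j)ᵀ *ᵥ w j)) :
    ∀ j k, 1 ≤ k → k < j → H j *ᵥ a k = 0 := by
  intro j
  induction j with
  | zero => intro k _ h; omega
  | succ j ih =>
    intro k hk hkj
    have hj : 1 ≤ j := by omega
    rw [hrec j hj, sub_mulVec, smul_mulVec, vecMulVec_mulVec']
    have hdp : ((H j)ᵀ *ᵥ w j) ⬝ᵥ a k = w j ⬝ᵥ (H j *ᵥ a k) := by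
      rw [mulVec_transpose, ← dotProduct_mulVec]
    rcases eq_or_lt_of_le (Nat.lt_succ_iff.mp hkj) with h | h
    · subst h
      rw [hdp, smul_smul, inv_mul_cancel₀ (hw k hk), one_smul, sub_self]
    · rw [ih k hk h, hdp, ih k hk h]
      simp
/-- Implicit LU factorization property of the ABS algorithm: the matrix
`L = A_iᵀ P_i` with entries `a_r ⬝ᵥ p_c` is lower triangular with nonzero
diagonal, hence nonsingular. -/
theorem abs_implicit_lu_factorization
    {n : ℕ} (H : ℕ → Matrix (Fin n) (Fin n) ℝ) (a w z p : ℕ → Fin n → ℝ)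
    (hH1 : (H 1).det ≠ 0)
    (hw : ∀ j, 1 ≤ j → w j ⬝ᵥ (H j *ᵥ a j) ≠ 0)
    (hz : ∀ j, 1 ≤ j → z j ⬝ᵥ (H j *ᵥ a j) ≠ 0)
    (hp : ∀ j, 1 ≤ j → p j = (H j)ᵀ *ᵥ z j)
    (hrec : ∀ j, 1 ≤ j →
      H (j + 1) = H j -
        (w j ⬝ᵥ (H j *ᵥ a j))⁻¹ • vecMulVec (H j *ᵥ a j) ((H j)ᵀ *ᵥ w j))
    (i : ℕ) (L : Matrix (Fin i) (Fin i) ℝ)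
    (hL : L = Matrix.of fun r c : Fin i => a (r.1 + 1) ⬝ᵥ p (c.1 + 1)) :
    (∀ r c : Fin i, r < c → L r c = 0) ∧ (∀ r : Fin i, L r r ≠ 0) ∧ L.det ≠ 0 := by
  have key := abs_key H a w hw hrec
  have hentry : ∀ r c : Fin i, L r c = z (c.1 + 1) ⬝ᵥ (H (c.1 + 1) *ᵥ a (r.1 + 1)) := by
    intro r c
    rw [hL]
    simp only [Matrix.of_apply]
    rw [hp (c.1 + 1) (by omega), mulVec_transpose, dotProduct_comm, dotProduct_mulVec]
  have htri : ∀ r c : Fin i, r < c → L r c = 0 := by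
    intro r c hrc
    rw [hentry, key (c.1 + 1) (r.1 + 1) (by omega) (by exact Nat.add_lt_add_right hrc 1)]
    simp
  have hdiag : ∀ r : Fin i, L r r ≠ 0 := by
    intro r
    rw [hentry]
    exact hz (r.1 + 1) (by omega)
  refine ⟨htri, hdiag, ?_⟩
  have hbt : L.BlockTriangular OrderDual.toDual := by
    intro r c h
    exact htri r c h
  rw [Matrix.det_of_lowerTriangular L hbt]
  exact Finset.prod_ne_zero_iff.mpr fun r _ => hdiag r
end

section
/- Under the Abaffian update with w_iᵀ H_i a_i ≠ 0 for all i ≤ t and H₁ nonsingular, the matrix H_{t+1} has rank n - t, provided a₁,…,a_t are such that H_i a_i ≠ 0 at every step. -/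
open Matrix

lemma abs_rank_update {n : ℕ} (M : Matrix (Fin n) (Fin n) ℝ) (a w : Fin n → ℝ)
    (hc : w ⬝ᵥ (M *ᵥ a) ≠ 0) :
    (M - (w ⬝ᵥ (M *ᵥ a))⁻¹ • vecMulVec (M *ᵥ a) (Mᵀ *ᵥ w)).rank + 1 = M.rank := by
  set c := w ⬝ᵥ (M *ᵥ a) with hcdef
  set M' := M - c⁻¹ • vecMulVec (M *ᵥ a) (Mᵀ *ᵥ w) with hM'
  have hMa : M *ᵥ a ≠ 0 := by
    intro h; apply hc; rw [hcdef, h, dotProduct_zero]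
  have key : ∀ x, M' *ᵥ x = M *ᵥ (x - (c⁻¹ * (w ⬝ᵥ (M *ᵥ x))) • a) := by
    intro x
    have hvv : ∀ (u v y : Fin n → ℝ), vecMulVec u v *ᵥ y = (v ⬝ᵥ y) • u := by
      intro u v y; ext i
      simp [vecMulVec_apply, mulVec, dotProduct, Finset.mul_sum, mul_comm, mul_left_comm]
    rw [hM', sub_mulVec, smul_mulVec, hvv]
    have hdp : (Mᵀ *ᵥ w) ⬝ᵥ x = w ⬝ᵥ (M *ᵥ x) := by
      rw [mulVec_transpose, dotProduct_mulVec]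
    rw [hdp, mulVec_sub, mulVec_smul, smul_smul]
  have hker : LinearMap.ker M'.mulVecLin =
      LinearMap.ker M.mulVecLin ⊔ Submodule.span ℝ {a} := by
    apply le_antisymm
    · intro x hx
      simp only [LinearMap.mem_ker, mulVecLin_apply] at hx
      rw [key] at hx
      have : x = (x - (c⁻¹ * (w ⬝ᵥ (M *ᵥ x))) • a) + (c⁻¹ * (w ⬝ᵥ (M *ᵥ x))) • a := by ring_nf
      rw [this]
      exact Submodule.add_mem _ (Submodule.mem_sup_left hx)
        (Submodule.mem_sup_right (Submodule.smul_mem _ _ (Submodule.mem_span_singleton_self a)))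
    · rw [sup_le_iff]
      constructor
      · intro x hx
        simp only [LinearMap.mem_ker, mulVecLin_apply] at hx ⊢
        simp [key, hx]
      · rw [Submodule.span_le, Set.singleton_subset_iff]
        simp only [SetLike.mem_coe, LinearMap.mem_ker, mulVecLin_apply]
        rw [key, ← hcdef, mul_comm, mul_inv_cancel₀ hc, one_smul, sub_self, mulVec_zero]
  have ha0 : a ≠ 0 := by
    intro h; apply hMa; rw [h, mulVec_zero]
  have hdisj : LinearMap.ker M.mulVecLin ⊓ Submodule.span ℝ {a} = ⊥ := by
    rw [Submodule.eq_bot_iff]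
    intro x hx
    rw [Submodule.mem_inf] at hx
    obtain ⟨hx1, hx2⟩ := hx
    rw [Submodule.mem_span_singleton] at hx2
    obtain ⟨r, rfl⟩ := hx2
    simp only [LinearMap.mem_ker, mulVecLin_apply, mulVec_smul] at hx1
    rcases eq_or_ne r 0 with h | h
    · simp [h]
    · exact absurd (by simpa [h] using congrArg (fun v => r⁻¹ • v) hx1) hMa
  have hspan1 : Module.finrank ℝ (Submodule.span ℝ {a}) = 1 :=
    finrank_span_singleton ha0
  have hsum := Submodule.finrank_sup_add_finrank_inf_eq
    (LinearMap.ker M.mulVecLin) (Submodule.span ℝ {a})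
  rw [hdisj, hspan1] at hsum
  simp only [finrank_bot, add_zero] at hsum
  have h1 := LinearMap.finrank_range_add_finrank_ker M.mulVecLin
  have h2 := LinearMap.finrank_range_add_finrank_ker M'.mulVecLin
  rw [hker] at h2
  have hpi : Module.finrank ℝ (Fin n → ℝ) = n := by simp
  rw [hpi] at h1 h2
  rw [Matrix.rank, Matrix.rank]
  omega

lemma abs_rank_pos {n : ℕ} (M : Matrix (Fin n) (Fin n) ℝ) (v : Fin n → ℝ)
    (hv : M *ᵥ v ≠ 0) : 0 < M.rank := by
  rw [Matrix.rank, Module.finrank_pos_iff]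
  refine ⟨⟨M *ᵥ v, ⟨v, rfl⟩⟩, 0, fun h => hv ?_⟩
  exact congrArg Subtype.val h

/-- Under the Abaffian update with `w_iᵀ H_i a_i ≠ 0` for `i ≤ t`, `H₁`
nonsingular and `H_i a_i ≠ 0` at every step, the matrix `H (t+1)` has rank
`n - t`. -/
theorem abs_abaffian_rank
    {n : ℕ} (t : ℕ) (H : ℕ → Matrix (Fin n) (Fin n) ℝ) (a w : ℕ → Fin n → ℝ)
    (hH1 : (H 1).det ≠ 0)
    (hw : ∀ i, 1 ≤ i → i ≤ t → w i ⬝ᵥ (H i *ᵥ a i) ≠ 0)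
    (hHa : ∀ i, 1 ≤ i → i ≤ t → H i *ᵥ a i ≠ 0)
    (hrec : ∀ i, 1 ≤ i → i ≤ t →
      H (i + 1) = H i -
        (w i ⬝ᵥ (H i *ᵥ a i))⁻¹ • vecMulVec (H i *ᵥ a i) ((H i)ᵀ *ᵥ w i)) :
    (H (t + 1)).rank = n - t := by
  induction t with
  | zero =>
    simp only [Nat.sub_zero]
    have : IsUnit (H 1) := by
      rw [Matrix.isUnit_iff_isUnit_det]
      exact hH1.isUnit
    simpa using Matrix.rank_of_isUnit _ this
  | succ t ih =>
    have hr := ih (fun i h1 h2 => hw i h1 (h2.trans (Nat.le_succ t)))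
      (fun i h1 h2 => hHa i h1 (h2.trans (Nat.le_succ t)))
      (fun i h1 h2 => hrec i h1 (h2.trans (Nat.le_succ t)))
    have key := abs_rank_update (H (t + 1)) (a (t + 1)) (w (t + 1))
      (hw (t + 1) (by omega) le_rfl)
    rw [← hrec (t + 1) (by omega) le_rfl] at key
    have hpos : 0 < (H (t + 1)).rank :=
      abs_rank_pos _ _ (hHa (t + 1) (by omega) le_rfl)
    omega
end
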